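/- arXiv:2512.01004 — 2 statements merged into one kernel-verified Lean document; each statement's English description precedes it below -/
import Mathlib

section
/- Let G be a group acting linearly on a finite-dimensional real vector space V. If V admits no G-invariant inner product, then the set of v ∈ V whose orbit Gv is unbounded is dense in V (in fact contains the complement of a proper linear subspace). -/
/-!
Vectors with bounded orbit form a subspace, so it suffices to show that if every orbit is bounded
then there is an invariant inner product. By uniform boundedness the image of `G` is then a bounded
set of operators; the units of the closure of the monoid it generates form a compact group
containing it, and averaging any inner product over a Haar measure of that group gives a
`G`-invariant one.
-/

open MeasureTheory Bornology Topology

section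

theorem Submodule.dense_compl_of_ne_top {R M : Type*} [Ring R] [TopologicalSpace R]
    [TopologicalSpace M] [AddCommGroup M] [ContinuousAdd M] [Module R M] [ContinuousSMul R M]
    [(𝓝[{x : R | IsUnit x}] 0).NeBot] {W : Submodule R M} (hW : W ≠ ⊤) :
    Dense (W : Set M)ᶜ :=
  interior_eq_empty_iff_dense_compl.mp <| Set.not_nonempty_iff_eq_empty.mp fun h =>
    hW (W.eq_top_of_nonempty_interior' h)

variable {V : Type*} [NormedAddCommGroup V] [NormedSpace ℝ V]

theorem exists_continuousBilin_symm_pos [FiniteDimensional ℝ V] :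
    ∃ P : V →L[ℝ] V →L[ℝ] ℝ, (∀ v w, P v w = P w v) ∧ ∀ v, v ≠ 0 → 0 < P v v := by
  let e : V ≃L[ℝ] EuclideanSpace ℝ (Fin (Module.finrank ℝ V)) :=
    ContinuousLinearEquiv.ofFinrankEq finrank_euclideanSpace_fin.symm
  exact ⟨(innerSL ℝ).bilinearComp e.toContinuousLinearMap e.toContinuousLinearMap,
    fun v w => real_inner_comm (e w) (e v),
    fun v hv => real_inner_self_pos.mpr (e.map_ne_zero_iff.mpr hv)⟩

section Averaging

variable [FiniteDimensional ℝ V] {K : Type*} [Group K] [TopologicalSpace K] [CompactSpace K]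
  [MeasurableSpace K] [OpensMeasurableSpace K] (μ : Measure K) [IsFiniteMeasure μ]
  (π : K →* V →L[ℝ] V) (P : V →L[ℝ] V →L[ℝ] ℝ)

noncomputable def averagedForm : V →L[ℝ] V →L[ℝ] ℝ :=
  ∫ k, P.bilinearComp (π k) (π k) ∂μ

variable {μ π P}

theorem averagedForm_apply (hπ : Continuous π) (v w : V) :
    averagedForm μ π P v w = ∫ k, P (π k v) (π k w) ∂μ := by
  have hcont_apply : ∀ v, Continuous fun k => P.bilinearComp (π k) (π k) v := fun v =>
    continuous_clm_apply.mpr fun w => by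
      simp only [ContinuousLinearMap.bilinearComp_apply]
      fun_prop
  have hcont : Continuous fun k => P.bilinearComp (π k) (π k) :=
    continuous_clm_apply.mpr hcont_apply
  rw [averagedForm,
    ContinuousLinearMap.integral_apply (hcont.integrable_of_hasCompactSupport (.of_compactSpace _)),
    ContinuousLinearMap.integral_apply
      ((hcont_apply v).integrable_of_hasCompactSupport (.of_compactSpace _))]
  rfl

theorem averagedForm_comm (hπ : Continuous π) (hP : ∀ v w, P v w = P w v) (v w : V) :
    averagedForm μ π P v w = averagedForm μ π P w v := by
  simp only [averagedForm_apply hπ, hP (π _ v)]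

theorem averagedForm_self_pos [NeZero μ] (hπ : Continuous π) (hP : ∀ v, v ≠ 0 → 0 < P v v)
    {v : V} (hv : v ≠ 0) : 0 < averagedForm μ π P v v := by
  have hpos : ∀ k, 0 < P (π k v) (π k v) := fun k => hP _ fun h => hv <| by
    simpa [← mul_apply_eq_comp, ← map_mul] using congr(π k⁻¹ $h)
  have hsupp : Function.support (fun k => P (π k v) (π k v)) = Set.univ :=
    Set.eq_univ_of_forall fun k => (hpos k).ne'
  rw [averagedForm_apply hπ, integral_pos_iff_support_of_nonneg (fun k => (hpos k).le)
    ((by fun_prop : Continuous _).integrable_of_hasCompactSupport (.of_compactSpace _)), hsupp]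
  exact Measure.measure_univ_pos.mpr (NeZero.ne μ)

theorem averagedForm_map_map [MeasurableMul K] [μ.IsMulRightInvariant] (hπ : Continuous π)
    (k : K) (v w : V) : averagedForm μ π P (π k v) (π k w) = averagedForm μ π P v w := by
  simp only [averagedForm_apply hπ, ← mul_apply_eq_comp, ← map_mul]
  exact integral_mul_right_eq_self (fun k' => P (π k' v) (π k' w)) k

end Averaging

theorem exists_invariant_inner_product_of_isBounded_range [FiniteDimensional ℝ V]
    {G : Type*} [Group G] (f : G →* V →L[ℝ] V) (hf : IsBounded (Set.range f)) :
    ∃ B : V →L[ℝ] V →L[ℝ] ℝ, (∀ v w, B v w = B w v) ∧ (∀ v, v ≠ 0 → 0 < B v v) ∧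
      ∀ g v w, B (f g v) (f g w) = B v w := by
  let K := (MonoidHom.mrange f).topologicalClosure.units
  have hK : IsCompact (K : Set (V →L[ℝ] V)ˣ) := Submonoid.units_isCompact <|
    Metric.isCompact_of_isClosed_isBounded (Submonoid.isClosed_topologicalClosure _) hf.closure
  have : CompactSpace K := isCompact_iff_compactSpace.mp hK
  let π : K →* V →L[ℝ] V := (Units.coeHom _).comp K.subtype
  have hπ : Continuous π := Units.continuous_val.comp continuous_subtype_val
  have hf_mem : ∀ g, ∃ k : K, π k = f g := fun g =>
    ⟨⟨f.toHomUnits g, Submonoid.mem_units_of_val_mem_inv_val_mem _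
      (Submonoid.le_topologicalClosure _ ⟨g, rfl⟩)
      (Submonoid.le_topologicalClosure _ ⟨g⁻¹, rfl⟩)⟩, rfl⟩
  borelize ↥K
  obtain ⟨P, hP_comm, hP_pos⟩ := exists_continuousBilin_symm_pos (V := V)
  -- `haar.inv` is right invariant, as `averagedForm_map_map` requires.
  refine ⟨averagedForm (Measure.haar : Measure K).inv π P, averagedForm_comm hπ hP_comm,
    fun v hv => averagedForm_self_pos hπ hP_pos hv, fun g v w => ?_⟩
  obtain ⟨k, hk⟩ := hf_mem g
  rw [← hk, averagedForm_map_map hπ]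

namespace Representation

variable {G : Type*} [Group G] (ρ : Representation ℝ G V)

def boundedOrbits : Submodule ℝ V where
  carrier := {v | IsBounded (Set.range fun g => ρ g v)}
  add_mem' {v w} hv hw := (hv.add hw).subset <| Set.range_subset_iff.mpr fun g => by
    rw [map_add]
    exact Set.add_mem_add ⟨g, rfl⟩ ⟨g, rfl⟩
  zero_mem' := by simp
  smul_mem' a v hv := (hv.smul₀ a).subset <| Set.range_subset_iff.mpr fun g => by
    rw [map_smul]
    exact Set.smul_mem_smul_set ⟨g, rfl⟩

theorem mem_boundedOrbits {v : V} :
    v ∈ ρ.boundedOrbits ↔ IsBounded (Set.range fun g => ρ g v) :=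
  Iff.rfl

theorem exists_invariant_inner_product_of_boundedOrbits_eq_top [FiniteDimensional ℝ V]
    (hρ : ρ.boundedOrbits = ⊤) :
    ∃ B : V →ₗ[ℝ] V →ₗ[ℝ] ℝ, (∀ v w, B v w = B w v) ∧ (∀ v, v ≠ 0 → 0 < B v v) ∧
      ∀ g v w, B (ρ g v) (ρ g w) = B v w := by
  let f : G →* V →L[ℝ] V := (Module.End.toContinuousLinearMap V).toMonoidHom.comp ρ
  have horbit : ∀ v, ∃ C, ∀ g, ‖f g v‖ ≤ C := fun v => by
    obtain ⟨C, hC⟩ := isBounded_iff_forall_norm_le.mp <|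
      ρ.mem_boundedOrbits.mp (hρ ▸ Submodule.mem_top)
    exact ⟨C, fun g => hC _ ⟨g, rfl⟩⟩
  obtain ⟨C, hC⟩ := banach_steinhaus horbit
  have hf : IsBounded (Set.range f) :=
    isBounded_iff_forall_norm_le.mpr ⟨C, Set.forall_mem_range.mpr hC⟩
  obtain ⟨B, hB⟩ := exists_invariant_inner_product_of_isBounded_range f hf
  exact ⟨B.toLinearMap₁₂, hB⟩

end Representation

end

theorem dense_unbounded_orbits_of_no_invariant_inner_product
    {G : Type*} [Group G]
    {V : Type*} [NormedAddCommGroup V] [NormedSpace ℝ V] [FiniteDimensional ℝ V]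
    (ρ : Representation ℝ G V)
    (hno : ¬ ∃ B : V →ₗ[ℝ] V →ₗ[ℝ] ℝ,
      (∀ v w : V, B v w = B w v) ∧
      (∀ v : V, v ≠ 0 → 0 < B v v) ∧
      (∀ (h : G) (v w : V), B (ρ h v) (ρ h w) = B v w)) :
    Dense {v : V | ¬ Bornology.IsBounded (Set.range fun h : G => ρ h v)} ∧
    ∃ W : Submodule ℝ V, W ≠ ⊤ ∧
      (W : Set V)ᶜ ⊆ {v : V | ¬ Bornology.IsBounded (Set.range fun h : G => ρ h v)} := by
  have hW : ρ.boundedOrbits ≠ ⊤ := fun h =>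
    hno (ρ.exists_invariant_inner_product_of_boundedOrbits_eq_top h)
  exact ⟨Submodule.dense_compl_of_ne_top hW, ρ.boundedOrbits, hW, subset_rfl⟩
end

section
/- Let g be an n-dimensional real Lie algebra with tr(ad_x) = 0 for all x, let ∂ be the Koszul boundary on Λ g and ∂^* its adjoint on Λ g^*. For τ ∈ Λ^{p-k} g^* ⊗ Λ^n g (in degree p-k), one has ∂^* τ = (-1)^{n-p+k} * ∂ *^{-1} τ, where * is the Hodge star isomorphism. -/
/-!
Pairing with `det` turns the claim into the identity `∂a ∧ b = (-1)^|a| a ∧ ∂b` for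
`|a| + |b| = n + 1`, applied to `a = σ = *⁻¹τ` and `b = Y`. On monomials the Koszul boundary
satisfies `∂(x ∧ u) = L_x u - x ∧ ∂u`, where `L_x` is the derivation of `Λ g` extending `ad x`.
Moving the factors of `a` across one at a time therefore only produces error terms
`L_x (a' ∧ b)` of degree `n`, and these vanish because `L_x` acts on `Λⁿ g` by `tr (ad x) = 0`.
-/

/-- The wedge monomial `x₁ ∧ ⋯ ∧ x_m` associated to a list of vectors. -/
noncomputable def wedgeList {g : Type*} [AddCommGroup g] [Module ℝ g]
    (l : List g) : ExteriorAlgebra ℝ g :=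
  (l.map fun x => ExteriorAlgebra.ι ℝ x).prod

namespace AlternatingMap

variable {R M N ι : Type*} [CommRing R] [AddCommGroup M] [Module R M] [AddCommGroup N]
  [Module R N] [DecidableEq ι]

theorem compLinearMap_update_id_apply (φ : M [⋀^ι]→ₗ[R] N) (f : M →ₗ[R] M) (j : ι) (v : ι → M) :
    φ.toMultilinearMap.compLinearMap (Function.update (fun _ => LinearMap.id) j f) v =
      φ (Function.update v j (f (v j))) := by
  simp only [MultilinearMap.compLinearMap_apply, coe_multilinearMap]
  congr 1
  funext t
  rcases eq_or_ne t j with rfl | htj <;> simp [*]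

variable [Fintype ι]

/-- The action of `f ∈ 𝔤𝔩(M)` on `φ` by derivations: `v ↦ ∑ⱼ φ (v₁, …, f vⱼ, …, vₘ)`. -/
noncomputable def sumUpdate (φ : M [⋀^ι]→ₗ[R] N) (f : M →ₗ[R] M) : M [⋀^ι]→ₗ[R] N where
  toMultilinearMap :=
    ∑ j, φ.toMultilinearMap.compLinearMap (Function.update (fun _ => LinearMap.id) j f)
  map_eq_zero_of_eq' v i k hvik hik := by
    change (∑ j, φ.toMultilinearMap.compLinearMap
      (Function.update (fun _ => LinearMap.id) j f)) v = 0
    simp only [FunLike.coe_sum, Finset.sum_apply, compLinearMap_update_id_apply]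
    have hvanish : ∀ j ∉ ({i, k} : Finset ι), φ (Function.update v j (f (v j))) = 0 := by
      intro j hj
      simp only [Finset.mem_insert, Finset.mem_singleton, not_or] at hj
      refine φ.map_eq_zero_of_eq _ ?_ hik
      rw [Function.update_of_ne (Ne.symm hj.1), Function.update_of_ne (Ne.symm hj.2), hvik]
    have hswap :
        Function.update v k (f (v k)) = Function.update v i (f (v i)) ∘ Equiv.swap i k := by
      funext t
      rcases eq_or_ne t i with rfl | hti
      · simp [Function.update_of_ne hik, Function.update_of_ne hik.symm, hvik]
      rcases eq_or_ne t k with rfl | htk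
      · simp [hvik]
      · simp [Function.update_of_ne htk, Equiv.swap_apply_of_ne_of_ne hti htk,
          Function.update_of_ne hti]
    rw [← Finset.sum_subset (Finset.subset_univ _) fun j _ => hvanish j, Finset.sum_pair hik,
      hswap, φ.map_swap _ hik, add_neg_cancel]

theorem sumUpdate_apply (φ : M [⋀^ι]→ₗ[R] N) (f : M →ₗ[R] M) (v : ι → M) :
    φ.sumUpdate f v = ∑ j, φ (Function.update v j (f (v j))) := by
  change (∑ j, φ.toMultilinearMap.compLinearMap
    (Function.update (fun _ => LinearMap.id) j f)) v = _
  simp only [FunLike.coe_sum, Finset.sum_apply, compLinearMap_update_id_apply]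

theorem sumUpdate_eq_trace_smul [Module.Free R M] [Module.Finite R M] [Nontrivial R]
    (hι : Fintype.card ι = Module.finrank R M) (φ : M [⋀^ι]→ₗ[R] N) (f : M →ₗ[R] M) :
    φ.sumUpdate f = LinearMap.trace R M f • φ := by
  let b : Module.Basis ι R M := (Module.finBasis R M).reindex (Fintype.equivFinOfCardEq hι).symm
  refine b.ext_alternating fun v hv => ?_
  have hv : Function.Bijective v := Finite.injective_iff_bijective.mp hv
  -- only the diagonal coefficient of `f (b (v j))` survives in slot `j`
  have hterm : ∀ j, φ (Function.update (fun i => b (v i)) j (f (b (v j)))) =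
      b.repr (f (b (v j))) (v j) • φ (fun i => b (v i)) := by
    intro j
    conv_lhs => rw [← b.sum_repr (f (b (v j)))]
    rw [φ.map_update_sum, Finset.sum_eq_single (v j)]
    · rw [φ.map_update_smul]
      congr 2
      exact Function.update_eq_self j _
    · intro i _ hi
      obtain ⟨j', rfl⟩ := hv.surjective i
      have hj' : j' ≠ j := fun h => hi (h ▸ rfl)
      rw [φ.map_update_smul, φ.map_eq_zero_of_eq _ (i := j') (j := j) (by simp [hj']) hj',
        smul_zero]
    · simp
  rw [sumUpdate_apply, smul_apply, Finset.sum_congr rfl fun j _ => hterm j, ← Finset.sum_smul,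
    LinearMap.trace_eq_matrix_trace R b]
  congr 1
  refine ((Equiv.ofBijective v hv).sum_comp fun i => b.repr (f (b i)) i).trans ?_
  simp [Matrix.trace, LinearMap.toMatrix_apply]

end AlternatingMap

open ExteriorAlgebra Module

theorem List.set_eq_ofFn_update {α : Type*} (l : List α) (j : Fin l.length) (a : α) :
    l.set j a = List.ofFn (Function.update l.get j a) := by
  refine List.ext_getElem (by simp) fun i h₁ h₂ => ?_
  simp [List.getElem_set, Function.update_apply, Fin.ext_iff, eq_comm]

section wedgeList

variable {g : Type*} [AddCommGroup g] [Module ℝ g]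

theorem ι_mul_ι_mul_eq_neg (x y : g) (z : ExteriorAlgebra ℝ g) :
    ι ℝ x * (ι ℝ y * z) = -(ι ℝ y * (ι ℝ x * z)) := by
  rw [← mul_assoc, ← mul_assoc, ← neg_mul, eq_neg_of_add_eq_zero_left (ι_add_mul_swap x y)]

@[simp]
theorem wedgeList_nil : wedgeList ([] : List g) = 1 := rfl

theorem wedgeList_cons (x : g) (l : List g) : wedgeList (x :: l) = ι ℝ x * wedgeList l := by
  simp [wedgeList]

theorem wedgeList_append (l₁ l₂ : List g) :
    wedgeList (l₁ ++ l₂) = wedgeList l₁ * wedgeList l₂ := by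
  simp [wedgeList]

theorem wedgeList_ofFn {m : ℕ} (v : Fin m → g) : wedgeList (List.ofFn v) = ιMulti ℝ m v := by
  rw [ιMulti_apply, wedgeList, List.map_ofFn]
  rfl

theorem wedgeList_eq_ιMulti_get (l : List g) : wedgeList l = ιMulti ℝ l.length l.get := by
  conv_lhs => rw [← List.ofFn_get l]
  exact wedgeList_ofFn _

theorem wedgeList_mem_exteriorPower (l : List g) : wedgeList l ∈ ⋀[ℝ]^l.length g := by
  rw [wedgeList_eq_ιMulti_get]
  exact ιMulti_range ℝ l.length ⟨_, rfl⟩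

theorem wedgeList_eq_zero_of_finrank_lt [FiniteDimensional ℝ g] {l : List g}
    (hl : finrank ℝ g < l.length) : wedgeList l = 0 := by
  rw [wedgeList_eq_ιMulti_get]
  refine AlternatingMap.map_linearDependent _ _ fun hli => ?_
  simpa using hli.fintype_card_le_finrank.trans_lt hl

theorem wedgeList_mul_ι (l : List g) (x : g) :
    wedgeList l * ι ℝ x = (-1 : ℝ) ^ l.length • (ι ℝ x * wedgeList l) := by
  induction l with
  | nil => simp
  | cons y t ih =>
    rw [wedgeList_cons, mul_assoc, ih, mul_smul_comm, ι_mul_ι_mul_eq_neg, List.length_cons,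
      pow_succ, mul_neg_one, neg_smul, smul_neg]

theorem wedgeList_cons_eraseIdx (a : g) :
    ∀ (l : List g) (j : ℕ), j < l.length →
      wedgeList (a :: l.eraseIdx j) = (-1 : ℝ) ^ j • wedgeList (l.set j a)
  | [], _, h => absurd h (Nat.not_lt_zero _)
  | _ :: _, 0, _ => by simp
  | y :: t, j + 1, h => by
    rw [List.eraseIdx_cons_succ, List.set_cons_succ, wedgeList_cons a, wedgeList_cons y,
      wedgeList_cons y, ι_mul_ι_mul_eq_neg, ← wedgeList_cons a,
      wedgeList_cons_eraseIdx a t j (by simpa using h), mul_smul_comm, pow_succ, mul_neg_one,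
      neg_smul]

@[elab_as_elim]
theorem exteriorPower_induction_on_wedgeList {m : ℕ} {P : ExteriorAlgebra ℝ g → Prop}
    (wedge : ∀ l : List g, l.length = m → P (wedgeList l)) (zero : P 0)
    (add : ∀ a b, P a → P b → P (a + b)) (smul : ∀ (c : ℝ) a, P a → P (c • a))
    {z : ExteriorAlgebra ℝ g} (hz : z ∈ ⋀[ℝ]^m g) : P z := by
  rw [← ιMulti_span_fixedDegree] at hz
  induction hz using Submodule.span_induction with
  | mem _ hv =>
    obtain ⟨v, rfl⟩ := hv
    simpa [wedgeList_ofFn] using wedge (List.ofFn v) (List.length_ofFn)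
  | zero => exact zero
  | add a b _ _ ha hb => exact add a b ha hb
  | smul c a _ ha => exact smul c a ha

theorem mul_ι_of_mem_exteriorPower {m : ℕ} {z : ExteriorAlgebra ℝ g} (hz : z ∈ ⋀[ℝ]^m g)
    (x : g) : z * ι ℝ x = (-1 : ℝ) ^ m • (ι ℝ x * z) := by
  refine exteriorPower_induction_on_wedgeList (fun l hl => ?_) ?_ (fun a b ha hb => ?_)
    (fun c a ha => ?_) hz
  · rw [wedgeList_mul_ι, hl]
  · simp
  · rw [add_mul, ha, hb, mul_add, smul_add]
  · rw [smul_mul_assoc, ha, mul_smul_comm, smul_comm]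

end wedgeList

section Koszul

variable {g : Type*} [LieRing g] [LieAlgebra ℝ g]

/-- Indices are 0-based, so the sign `(-1)^(i+j+1)` has the parity of the usual `(-1)^(i+j)`. -/
noncomputable def koszulTerm (l : List g) (i j : Fin l.length) : ExteriorAlgebra ℝ g :=
  if (i : ℕ) < j then
    (-1 : ℝ) ^ ((i : ℕ) + j + 1) • wedgeList (⁅l.get i, l.get j⁆ :: (l.eraseIdx j).eraseIdx i)
  else 0

def IsKoszulBoundary (bd : ExteriorAlgebra ℝ g →ₗ[ℝ] ExteriorAlgebra ℝ g) : Prop :=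
  ∀ l : List g, bd (wedgeList l) = ∑ i, ∑ j, koszulTerm l i j

/-- The derivation of `Λ g` extending `ad x`, evaluated on a wedge monomial. -/
noncomputable def lieDerivWedge (x : g) (l : List g) : ExteriorAlgebra ℝ g :=
  ∑ j : Fin l.length, wedgeList (l.set j ⁅x, l.get j⁆)

theorem koszulTerm_of_le (l : List g) {i j : Fin l.length} (h : j ≤ i) : koszulTerm l i j = 0 :=
  if_neg (not_lt.2 h)

theorem koszulTerm_mem_exteriorPower (l : List g) (i j : Fin l.length) :
    koszulTerm l i j ∈ ⋀[ℝ]^(l.length - 1) g := by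
  unfold koszulTerm
  split_ifs with hij
  · refine Submodule.smul_mem _ _ ?_
    convert wedgeList_mem_exteriorPower _ using 2
    simp only [List.length_cons, List.length_eraseIdx]
    have := j.isLt
    split_ifs <;> omega
  · exact Submodule.zero_mem _

theorem koszulTerm_cons_zero_succ (x : g) (u : List g) (j : Fin u.length) :
    koszulTerm (x :: u) (0 : Fin (u.length + 1)) j.succ = wedgeList (u.set j ⁅x, u.get j⁆) := by
  rw [koszulTerm, if_pos (by simp)]
  simp only [Fin.val_zero, Fin.val_succ, List.eraseIdx_cons_succ, List.eraseIdx_cons_zero,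
    List.get_eq_getElem, List.getElem_cons_zero, List.getElem_cons_succ]
  rw [wedgeList_cons_eraseIdx _ _ _ j.isLt, smul_smul, ← pow_add,
    Even.neg_one_pow ⟨j + 1, by ring⟩, one_smul]

theorem koszulTerm_cons_succ_succ (x : g) (u : List g) (i j : Fin u.length) :
    koszulTerm (x :: u) i.succ j.succ = -(ι ℝ x * koszulTerm u i j) := by
  unfold koszulTerm
  simp only [Fin.val_succ, add_lt_add_iff_right]
  split_ifs with hij
  · simp only [List.eraseIdx_cons_succ, List.get_eq_getElem, Fin.val_succ,
      List.getElem_cons_succ, wedgeList_cons]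
    rw [ι_mul_ι_mul_eq_neg, mul_smul_comm, smul_neg,
      show (i : ℕ) + 1 + (j + 1) + 1 = i + j + 1 + 2 by ring, pow_add, neg_one_sq, mul_one]
  · simp

theorem lieDerivWedge_eq_sumUpdate (x : g) (l : List g) :
    lieDerivWedge x l = (ιMulti ℝ l.length).sumUpdate (LieAlgebra.ad ℝ g x) l.get := by
  rw [lieDerivWedge, AlternatingMap.sumUpdate_apply]
  refine Finset.sum_congr rfl fun j _ => ?_
  rw [List.set_eq_ofFn_update, wedgeList_ofFn]
  rfl

theorem lieDerivWedge_eq_zero [FiniteDimensional ℝ g]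
    (htr : ∀ x : g, LinearMap.trace ℝ g (LieAlgebra.ad ℝ g x) = 0) (x : g) {l : List g}
    (hl : l.length = finrank ℝ g) : lieDerivWedge x l = 0 := by
  rw [lieDerivWedge_eq_sumUpdate, AlternatingMap.sumUpdate_eq_trace_smul (by simpa using hl),
    htr, zero_smul, AlternatingMap.zero_apply]

theorem lieDerivWedge_append (x : g) (u v : List g) :
    lieDerivWedge x (u ++ v) =
      lieDerivWedge x u * wedgeList v + wedgeList u * lieDerivWedge x v := by
  rw [lieDerivWedge, lieDerivWedge, lieDerivWedge, Finset.sum_mul, Finset.mul_sum,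
    ← Fin.sum_congr' _ List.length_append.symm, Fin.sum_univ_add]
  congr 1
  · refine Finset.sum_congr rfl fun i _ => ?_
    simp [wedgeList_append, List.getElem_append_left]
  · refine Finset.sum_congr rfl fun i _ => ?_
    simp [wedgeList_append, List.getElem_append_right]

namespace IsKoszulBoundary

variable {bd : ExteriorAlgebra ℝ g →ₗ[ℝ] ExteriorAlgebra ℝ g}

theorem map_one (hK : IsKoszulBoundary bd) : bd 1 = 0 := by
  simpa using hK []

theorem map_wedgeList_cons (hK : IsKoszulBoundary bd) (x : g) (u : List g) :
    bd (wedgeList (x :: u)) = lieDerivWedge x u - ι ℝ x * bd (wedgeList u) := by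
  rw [hK, hK, lieDerivWedge, Finset.mul_sum, sub_eq_add_neg, ← Finset.sum_neg_distrib]
  refine (Fin.sum_univ_succ (n := u.length) _).trans
    (congrArg₂ (· + ·) ((Fin.sum_univ_succ _).trans ?_) (Finset.sum_congr rfl fun i _ => ?_))
  · rw [koszulTerm_of_le _ le_rfl, zero_add]
    exact Finset.sum_congr rfl fun j _ => koszulTerm_cons_zero_succ x u j
  · rw [Finset.mul_sum, ← Finset.sum_neg_distrib]
    refine (Fin.sum_univ_succ (n := u.length) _).trans ?_
    rw [koszulTerm_of_le _ (Fin.zero_le _), zero_add]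
    exact Finset.sum_congr rfl fun j _ => koszulTerm_cons_succ_succ x u i j

theorem map_mem_exteriorPower (hK : IsKoszulBoundary bd) {m : ℕ} {z : ExteriorAlgebra ℝ g}
    (hz : z ∈ ⋀[ℝ]^(m + 1) g) : bd z ∈ ⋀[ℝ]^m g := by
  refine exteriorPower_induction_on_wedgeList (fun l hl => ?_) ?_ (fun a b ha hb => ?_)
    (fun c a ha => ?_) hz
  · rw [hK]
    refine Submodule.sum_mem _ fun i _ => Submodule.sum_mem _ fun j _ => ?_
    simpa [hl] using koszulTerm_mem_exteriorPower l i j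
  · simp
  · rw [map_add]
    exact add_mem ha hb
  · rw [map_smul]
    exact Submodule.smul_mem _ c ha

theorem map_wedgeList_mul_ι (hK : IsKoszulBoundary bd) (l : List g) (x : g) :
    bd (wedgeList l) * ι ℝ x = (-1 : ℝ) ^ (l.length + 1) • (ι ℝ x * bd (wedgeList l)) := by
  cases l with
  | nil => simp [hK.map_one]
  | cons y t =>
    have hdeg : bd (wedgeList (y :: t)) ∈ ⋀[ℝ]^t.length g :=
      hK.map_mem_exteriorPower (wedgeList_mem_exteriorPower (y :: t))
    rw [mul_ι_of_mem_exteriorPower hdeg, List.length_cons, pow_succ, pow_succ, mul_assoc,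
      neg_one_mul, neg_neg, mul_one]

theorem map_wedgeList_mul_wedgeList [FiniteDimensional ℝ g] (hK : IsKoszulBoundary bd)
    (htr : ∀ x : g, LinearMap.trace ℝ g (LieAlgebra.ad ℝ g x) = 0) :
    ∀ la lb : List g, la.length + lb.length = finrank ℝ g + 1 →
      bd (wedgeList la) * wedgeList lb = (-1 : ℝ) ^ la.length • (wedgeList la * bd (wedgeList lb))
  | [], lb, h => by
    rw [wedgeList_eq_zero_of_finrank_lt (l := lb) (by simp at h; omega)]
    simp
  | x :: la, lb, h => by
    have ih := map_wedgeList_mul_wedgeList hK htr la (x :: lb) (by simp at h ⊢; omega)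
    have hpull : ι ℝ x * (bd (wedgeList la) * wedgeList lb) =
        -(wedgeList la * bd (wedgeList (x :: lb))) := calc
      _ = (-1 : ℝ) ^ (la.length + 1) • (bd (wedgeList la) * wedgeList (x :: lb)) := by
        rw [wedgeList_cons, ← mul_assoc (bd _), hK.map_wedgeList_mul_ι, smul_mul_assoc, smul_smul,
          ← pow_add, Even.neg_one_pow ⟨_, rfl⟩, one_smul, mul_assoc]
      _ = -(wedgeList la * bd (wedgeList (x :: lb))) := by
        rw [ih, smul_smul, ← pow_add, Odd.neg_one_pow ⟨la.length, by ring⟩, neg_one_smul]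
    have hvanish : lieDerivWedge x (la ++ lb) = 0 :=
      lieDerivWedge_eq_zero htr x (by simp at h ⊢; omega)
    calc bd (wedgeList (x :: la)) * wedgeList lb
        = lieDerivWedge x la * wedgeList lb - ι ℝ x * (bd (wedgeList la) * wedgeList lb) := by
          rw [hK.map_wedgeList_cons, sub_mul, mul_assoc]
      _ = lieDerivWedge x (la ++ lb) - wedgeList la * ι ℝ x * bd (wedgeList lb) := by
          rw [hpull, hK.map_wedgeList_cons, lieDerivWedge_append]
          noncomm_ring
      _ = (-1 : ℝ) ^ (x :: la).length • (wedgeList (x :: la) * bd (wedgeList lb)) := by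
          rw [hvanish, zero_sub, wedgeList_mul_ι, smul_mul_assoc, wedgeList_cons, mul_assoc,
            List.length_cons, pow_succ, mul_neg_one, neg_smul]

theorem map_mul_eq_smul_mul_map [FiniteDimensional ℝ g] (hK : IsKoszulBoundary bd)
    (htr : ∀ x : g, LinearMap.trace ℝ g (LieAlgebra.ad ℝ g x) = 0) {q q' : ℕ}
    (hqq' : q + q' = finrank ℝ g + 1) {a b : ExteriorAlgebra ℝ g} (ha : a ∈ ⋀[ℝ]^q g)
    (hb : b ∈ ⋀[ℝ]^q' g) : bd a * b = (-1 : ℝ) ^ q • (a * bd b) := by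
  refine exteriorPower_induction_on_wedgeList (fun la hla => ?_) (by simp)
    (fun a₁ a₂ h₁ h₂ => by rw [map_add, add_mul, h₁, h₂, add_mul, smul_add])
    (fun c a h => by rw [map_smul, smul_mul_assoc, h, smul_mul_assoc, smul_comm]) ha
  refine exteriorPower_induction_on_wedgeList (fun lb hlb => ?_) (by simp)
    (fun b₁ b₂ h₁ h₂ => by rw [mul_add, h₁, h₂, map_add, mul_add, smul_add])
    (fun c b h => by rw [mul_smul_comm, h, map_smul, mul_smul_comm, smul_comm]) hb
  rw [← hla]
  exact hK.map_wedgeList_mul_wedgeList htr la lb (by omega)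

end IsKoszulBoundary

end Koszul

theorem koszul_adjoint_via_hodge_star
    {g : Type*} [LieRing g] [LieAlgebra ℝ g] [FiniteDimensional ℝ g]
    {n p k : ℕ} (hn : Module.finrank ℝ g = n) (hk : k ≤ p) (hp : p ≤ n)
    (htr : ∀ x : g, LinearMap.trace ℝ g (LieAlgebra.ad ℝ g x) = 0)
    (bd : ExteriorAlgebra ℝ g →ₗ[ℝ] ExteriorAlgebra ℝ g)
    (hKoszul : ∀ l : List g,
      bd (wedgeList l) =
        ∑ i : Fin l.length, ∑ j : Fin l.length,
          if (i : ℕ) < (j : ℕ) then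
            ((-1 : ℝ)) ^ ((i : ℕ) + (j : ℕ) + 1) •
              wedgeList (⁅l.get i, l.get j⁆ :: (l.eraseIdx j).eraseIdx i)
          else 0)
    (detF ω : ExteriorAlgebra ℝ g →ₗ[ℝ] ℝ)
    (σ : ExteriorAlgebra ℝ g) (hσ : σ ∈ ⋀[ℝ]^(n - (p - k)) g)
    (hpair : ∀ Y ∈ ⋀[ℝ]^(p - k) g, detF (σ * Y) = ω Y) :
    ∀ Y ∈ ⋀[ℝ]^(p - k + 1) g,
      ω (bd Y) = ((-1 : ℝ)) ^ (n - p + k) * detF (bd σ * Y) := by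
  intro Y hY
  have hK : IsKoszulBoundary bd := hKoszul
  have hswap : bd σ * Y = (-1 : ℝ) ^ (n - p + k) • (σ * bd Y) := by
    rw [hK.map_mul_eq_smul_mul_map htr (by omega) hσ hY]
    congr 2
    omega
  rw [← hpair _ (hK.map_mem_exteriorPower hY), hswap, map_smul, smul_eq_mul, ← mul_assoc,
    ← pow_add, Even.neg_one_pow ⟨_, rfl⟩, one_mul]
end
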